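/- Let L be a frame. The maps F ↦ ⋂_{a∈F} 𝔬(a) and S ↦ {a ∈ L | S ⊆ 𝔬(a)} are mutually inverse order isomorphisms between the poset of strongly exact filters of L, ordered by reverse inclusion, and the poset of fitted sublocales of L, ordered by inclusion. -/
import Mathlib


/-- A filter of a frame: a nonempty, upward-closed subset closed under binary meets. -/
def IsFrameFilter {L : Type*} [Order.Frame L] (F : Set L) : Prop :=
  F.Nonempty ∧ (∀ x y : L, x ∈ F → x ≤ y → y ∈ F) ∧ (∀ x y : L, x ∈ F → y ∈ F → x ⊓ y ∈ F)

/-- The open sublocale `𝔬(a) = {x | a → x = x}`. -/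
def opn {L : Type*} [Order.Frame L] (a : L) : Set L := {x | a ⇨ x = x}

/-- The meet of `M` is strongly exact if `⋂_{m∈M} 𝔬(m) = 𝔬(⋀M)`. -/
def StronglyExactMeet {L : Type*} [Order.Frame L] (M : Set L) : Prop :=
  (⋂ m ∈ M, opn m) = opn (sInf M)

/-- The meet of `M` is exact if `(⋀M) ∨ b = ⋀_{m∈M}(m ∨ b)` for every `b`. -/
def ExactMeet {L : Type*} [Order.Frame L] (M : Set L) : Prop :=
  ∀ b : L, sInf M ⊔ b = ⨅ m ∈ M, (m ⊔ b)

/-- A strongly exact filter. -/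
def IsStronglyExactFilter {L : Type*} [Order.Frame L] (F : Set L) : Prop :=
  IsFrameFilter F ∧ ∀ M ⊆ F, StronglyExactMeet M → sInf M ∈ F

/-- An exact filter. -/
def IsExactFilter {L : Type*} [Order.Frame L] (F : Set L) : Prop :=
  IsFrameFilter F ∧ ∀ M ⊆ F, ExactMeet M → sInf M ∈ F

/-- A Scott-open filter. -/
def IsScottOpenFilter {L : Type*} [Order.Frame L] (F : Set L) : Prop :=
  IsFrameFilter F ∧
    ∀ D : Set L, D.Nonempty → DirectedOn (· ≤ ·) D → sSup D ∈ F → ∃ d ∈ D, d ∈ F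

/-- A completely prime filter: a proper filter such that `⋁A ∈ F` implies `a ∈ F`
for some `a ∈ A`. -/
def IsCompletelyPrimeFilter {L : Type*} [Order.Frame L] (F : Set L) : Prop :=
  IsFrameFilter F ∧ F ≠ Set.univ ∧ ∀ A : Set L, sSup A ∈ F → ∃ a ∈ A, a ∈ F

/-- The closed filter `𝔠f(a) = {x | x ∨ a = 1}`. -/
def closedFilter {L : Type*} [Order.Frame L] (a : L) : Set L := {x | x ⊔ a = ⊤}

/-- A regular filter: one of the form `{x | ∀ b ∈ F, x ∨ b = 1}` for some filter `F`. -/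
def IsRegularFilter {L : Type*} [Order.Frame L] (G : Set L) : Prop :=
  ∃ F : Set L, IsFrameFilter F ∧ G = {x : L | ∀ b ∈ F, x ⊔ b = ⊤}

/-- Subfitness of a frame. -/
def Subfit (L : Type*) [Order.Frame L] : Prop :=
  ∀ a b : L, (∀ c : L, a ⊔ c = ⊤ → b ⊔ c = ⊤) → a ≤ b

/-- A sublocale: a subset closed under all meets and under `a → (-)` for all `a`. -/
def IsSublocale {L : Type*} [Order.Frame L] (S : Set L) : Prop :=
  (∀ A ⊆ S, sInf A ∈ S) ∧ ∀ a : L, ∀ s ∈ S, (a ⇨ s) ∈ S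

/-- The fitting of a sublocale: intersection of the open sublocales above it. -/
def fitSl {L : Type*} [Order.Frame L] (S : Set L) : Set L :=
  ⋂ a ∈ {a : L | S ⊆ opn a}, opn a

/-- The sublocale `⋂_{a∈F} 𝔬(a)` associated to a filter `F`. -/
def fts {L : Type*} [Order.Frame L] (F : Set L) : Set L := ⋂ a ∈ F, opn a

/-- The filter `{a | S ⊆ 𝔬(a)}` associated to a sublocale `S`. -/
def stf {L : Type*} [Order.Frame L] (S : Set L) : Set L := {a : L | S ⊆ opn a}


section Helpers
variable {L : Type*} [Order.Frame L]

lemma mem_opn_iff {a x : L} : x ∈ opn a ↔ a ⇨ x = x := Iff.rfl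

lemma opn_mono {a b : L} (h : a ≤ b) : opn a ⊆ opn b := by
  intro x hx
  have hx' : a ⇨ x = x := hx
  have h1 : b ⇨ x ≤ a ⇨ x := himp_le_himp_right h
  exact le_antisymm (h1.trans (le_of_eq hx')) le_himp

lemma opn_top : opn (⊤ : L) = Set.univ := by
  ext x; simp [opn]

lemma opn_inf (x y : L) : opn (x ⊓ y) = opn x ∩ opn y := by
  ext z
  constructor
  · intro hz
    have hz' : (x ⊓ y) ⇨ z = z := hz
    constructor
    · have h1 : x ⇨ z ≤ (x ⊓ y) ⇨ z := himp_le_himp_right inf_le_left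
      exact le_antisymm (h1.trans (le_of_eq hz')) le_himp
    · have h1 : y ⇨ z ≤ (x ⊓ y) ⇨ z := himp_le_himp_right inf_le_right
      exact le_antisymm (h1.trans (le_of_eq hz')) le_himp
  · rintro ⟨h1, h2⟩
    show (x ⊓ y) ⇨ z = z
    have h1' : x ⇨ z = z := h1
    have h2' : y ⇨ z = z := h2
    rw [← himp_himp, h2', h1']

lemma opn_le_reflect {u v : L} (h : opn u ⊆ opn v) : u ≤ v := by
  have hm : u ⇨ (u ⊓ v) ∈ opn u := by
    show u ⇨ (u ⇨ (u ⊓ v)) = u ⇨ (u ⊓ v)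
    rw [himp_himp, inf_idem]
  have h2 : v ⇨ (u ⇨ (u ⊓ v)) = u ⇨ (u ⊓ v) := h hm
  have h3 : v ⇨ (u ⇨ (u ⊓ v)) = ⊤ := by
    rw [himp_eq_top_iff, le_himp_iff]
    exact inf_le_inf_right u le_rfl |>.trans (le_of_eq (inf_comm v u)) |>.trans
      (inf_le_inf le_rfl le_rfl)
  have h4 : u ⇨ (u ⊓ v) = ⊤ := by rw [← h2, h3]
  have h5 : u ≤ u ⊓ v := himp_eq_top_iff.mp h4
  exact h5.trans inf_le_right

lemma fts_subset_opn {F : Set L} {a : L} (ha : a ∈ F) : fts F ⊆ opn a := by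
  intro x hx
  exact Set.mem_iInter₂.mp hx a ha

/-- The key fixed-point lemma. -/
lemma key_lemma {F : Set L} (hF : IsFrameFilter F) {b : L}
    (hb : ∀ s : L, (∀ a ∈ F, a ⇨ s = s) → b ⇨ s = s)
    (x : L) (hx : ∀ m ∈ F, b ≤ m → m ⇨ x = x) : b ⇨ x = x := by
  set T : Set L := {s | x ≤ s ∧ ∀ a ∈ F, a ⇨ s = s} with hT
  set t := sInf T with ht
  have hxt : x ≤ t := le_sInf fun s hs => hs.1
  have hfix : ∀ a ∈ F, a ⇨ t = t := by
    intro a ha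
    refine le_antisymm (le_sInf fun s hs => ?_) le_himp
    have h1 : a ⇨ t ≤ a ⇨ s := himp_le_himp_left (sInf_le hs)
    rwa [hs.2 a ha] at h1
  set q := b ⇨ x with hq
  have hqb : q ⊓ b ≤ x := himp_inf_le
  set c := q ⇨ x with hc
  have hcmem : c ∈ T := by
    constructor
    · exact le_himp
    · intro a ha
      refine le_antisymm ?_ le_himp
      rw [le_himp_iff]
      have hab : (a ⊔ b) ⇨ x = x :=
        hx (a ⊔ b) (hF.2.1 a (a ⊔ b) ha le_sup_left) le_sup_right
      have hstep : (a ⇨ c) ⊓ q ≤ (a ⊔ b) ⇨ x := by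
        rw [le_himp_iff, inf_sup_left]
        refine sup_le ?_ ?_
        · have h1 : (a ⇨ c) ⊓ a ≤ c := himp_inf_le
          calc (a ⇨ c) ⊓ q ⊓ a = ((a ⇨ c) ⊓ a) ⊓ q := by ac_rfl
            _ ≤ c ⊓ q := inf_le_inf_right q h1
            _ ≤ x := himp_inf_le
        · calc (a ⇨ c) ⊓ q ⊓ b ≤ q ⊓ b := inf_le_inf_right b inf_le_right
            _ ≤ x := hqb
      exact hstep.trans (le_of_eq hab)
  have htc : t ≤ c := sInf_le hcmem
  have hbt : b ⇨ t = t := hb t hfix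
  have hqt : q ≤ t := by
    have : q ≤ b ⇨ t := himp_le_himp_left hxt
    rwa [hbt] at this
  have hqx : q ≤ x := by
    have hqc : q ≤ c := hqt.trans htc
    calc q = q ⊓ (q ⇨ x) := by rw [inf_eq_left.mpr hqc]
      _ ≤ x := inf_himp_le
  exact le_antisymm hqx le_himp

/-- stf of any set is a strongly exact filter. -/
lemma stf_isStronglyExactFilter (S : Set L) : IsStronglyExactFilter (stf S) := by
  refine ⟨⟨⟨⊤, ?_⟩, ?_, ?_⟩, ?_⟩
  · show S ⊆ opn ⊤
    rw [opn_top]; exact Set.subset_univ S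
  · intro x y hx hxy
    exact Set.Subset.trans hx (opn_mono hxy)
  · intro x y hx hy
    show S ⊆ opn (x ⊓ y)
    rw [opn_inf]
    exact Set.subset_inter hx hy
  · intro M hM hse
    show S ⊆ opn (sInf M)
    rw [← hse]
    exact Set.subset_iInter₂ fun m hm => hM hm

lemma stf_fts_eq {F : Set L} (hF : IsStronglyExactFilter F) : stf (fts F) = F := by
  apply Set.Subset.antisymm
  · intro b hbmem
    have h : fts F ⊆ opn b := hbmem
    have hb : ∀ s : L, (∀ a ∈ F, a ⇨ s = s) → b ⇨ s = s := by
      intro s hs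
      exact h (Set.mem_iInter₂.mpr fun a ha => hs a ha)
    set M : Set L := {m | m ∈ F ∧ b ≤ m} with hM
    have hMF : M ⊆ F := fun m hm => hm.1
    have hbleM : b ≤ sInf M := le_sInf fun m hm => hm.2
    have hsub : (⋂ m ∈ M, opn m) ⊆ opn b := by
      intro x hxmem
      exact key_lemma hF.1 hb x fun m hm hbm =>
        Set.mem_iInter₂.mp hxmem m ⟨hm, hbm⟩
    have hSE : StronglyExactMeet M := by
      apply Set.Subset.antisymm
      · intro x hxmem
        have hbx : b ⇨ x = x := hsub hxmem
        show sInf M ⇨ x = x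
        have h1 : sInf M ⇨ x ≤ b ⇨ x := himp_le_himp_right hbleM
        exact le_antisymm (h1.trans (le_of_eq hbx)) le_himp
      · intro x hxmem
        exact Set.mem_iInter₂.mpr fun m hm => opn_mono (sInf_le hm) hxmem
    have hinF : sInf M ∈ F := hF.2 M hMF hSE
    have hle : sInf M ≤ b := by
      apply opn_le_reflect
      rw [← hSE]
      exact hsub
    exact hF.1.2.1 (sInf M) b hinF hle
  · intro a ha
    exact fts_subset_opn ha

end Helpers

/-- The maps `F ↦ ⋂_{a∈F} 𝔬(a)` and `S ↦ {a | S ⊆ 𝔬(a)}` are mutually inverse order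
isomorphisms between strongly exact filters ordered by reverse inclusion and fitted
sublocales ordered by inclusion. -/
theorem stmt14 {L : Type*} [Order.Frame L] :
    (∀ F : Set L, IsStronglyExactFilter F → ∃ M : Set L, fts F = ⋂ m ∈ M, opn m) ∧
    (∀ S : Set L, (∃ M : Set L, S = ⋂ m ∈ M, opn m) → IsStronglyExactFilter (stf S)) ∧
    (∀ F : Set L, IsStronglyExactFilter F → stf (fts F) = F) ∧
    (∀ S : Set L, (∃ M : Set L, S = ⋂ m ∈ M, opn m) → fts (stf S) = S) ∧
    (∀ F G : Set L, IsStronglyExactFilter F → IsStronglyExactFilter G →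
      (G ⊆ F ↔ fts F ⊆ fts G)) := by
  refine ⟨?_, ?_, ?_, ?_, ?_⟩
  · intro F _
    exact ⟨F, rfl⟩
  · intro S _
    exact stf_isStronglyExactFilter S
  · intro F hF
    exact stf_fts_eq hF
  · intro S hS
    apply Set.Subset.antisymm
    · obtain ⟨M, rfl⟩ := hS
      refine Set.subset_iInter₂ fun m hm => ?_
      have hm' : m ∈ stf (⋂ m ∈ M, opn m) :=
        Set.iInter₂_subset m hm
      exact fts_subset_opn hm'
    · intro x hx
      exact Set.mem_iInter₂.mpr fun a ha => ha hx
  · intro F G hF hG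
    constructor
    · intro hGF x hx
      exact Set.mem_iInter₂.mpr fun a ha => Set.mem_iInter₂.mp hx a (hGF ha)
    · intro hfts
      have h : stf (fts G) ⊆ stf (fts F) := fun a ha => Set.Subset.trans hfts ha
      rw [stf_fts_eq hF, stf_fts_eq hG] at h
      exact h
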